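/- arXiv:1910.01868 — 3 statements merged into one kernel-verified Lean document; each statement's English description precedes it below -/
import Mathlib

section
/- Let F be a quadratically closed field (a field with no quadratic field extension) and let r ≥ 1. Then every system of r quadratic forms on an F-vector space of dimension strictly greater than r(r+1)/2 is isotropic. -/
/-!
Induct on `r`. Given `v ≠ 0` isotropic for `φ₁, …, φ_r` with `φ_{r+1}(v) ≠ 0`, cut out the
subspace `W` by the `r + 1` linear conditions `B_i(v, ·) = 0` (`B_i` the polar form of `φ_i`,
`i ≤ r`) and `f = 0` for a functional `f` with `f v ≠ 0`. Then `dim W > r(r+1)/2`, so by induction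
`W` contains `w ≠ 0` isotropic for `φ₁, …, φ_r`. On the line `t ↦ t • v + w` these forms vanish
identically, while `φ_{r+1}(t • v + w)` is a quadratic in `t` with leading coefficient
`φ_{r+1}(v) ≠ 0`, which has a root since `F` is quadratically closed.
-/

universe u

/-- A field `F` is *quadratically closed* if it has no quadratic field extension. -/
def QuadraticallyClosed (F : Type u) [Field F] : Prop :=
  ∀ (K : Type u) (_ : Field K) (_ : Algebra F K), Module.finrank F K ≠ 2

open Module MvPolynomial Polynomial

theorem QuadraticallyClosed.exists_isRoot_of_natDegree_eq_two {F : Type u} [Field F]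
    (hF : QuadraticallyClosed F) {p : F[X]} (hp : p.natDegree = 2) : ∃ t, p.IsRoot t := by
  by_contra! h
  have hirr : Irreducible p :=
    (irreducible_iff_roots_eq_zero_of_degree_le_three (by omega) (by omega)).mpr
      (Multiset.eq_zero_of_forall_notMem fun t ht => h t (isRoot_of_mem_roots ht))
  have := Fact.mk hirr
  exact hF (AdjoinRoot p) inferInstance inferInstance
    (finrank_quotient_span_eq_natDegree.trans hp)

theorem Finsupp.exists_eq_single_add_single_of_degree_eq_two {σ : Type*} {d : σ →₀ ℕ}
    (hd : d.degree = 2) : ∃ i j, d = single i 1 + single j 1 := by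
  have hcard : Multiset.card (toMultiset d) = 2 := by
    rw [card_toMultiset]
    exact hd
  obtain ⟨i, j, hij⟩ := Multiset.card_eq_two.mp hcard
  classical
  refine ⟨i, j, ?_⟩
  rw [← Multiset.toFinsupp_singleton, ← Multiset.toFinsupp_singleton, ← Multiset.toFinsupp_add,
    ← toMultiset_eq_iff, hij]
  rfl

theorem MvPolynomial.IsHomogeneous.mem_span_X_mul_X {R σ : Type*} [CommSemiring R]
    {φ : MvPolynomial σ R} (hφ : φ.IsHomogeneous 2) :
    φ ∈ Submodule.span R (Set.range fun p : σ × σ => (X p.1 * X p.2 : MvPolynomial σ R)) := by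
  rw [φ.as_sum]
  refine Submodule.sum_mem _ fun d hd => ?_
  obtain ⟨i, j, rfl⟩ := Finsupp.exists_eq_single_add_single_of_degree_eq_two
    (by rw [Finsupp.degree_eq_weight_one]; exact hφ (mem_support_iff.mp hd))
  have hX : monomial (Finsupp.single i 1 + Finsupp.single j 1) (1 : R) = X i * X j := by
    rw [X, X, monomial_mul, one_mul]
  rw [← mul_one (coeff _ φ), ← smul_eq_mul, ← smul_monomial, hX]
  exact Submodule.smul_mem _ _ (Submodule.subset_span ⟨(i, j), rfl⟩)

theorem MvPolynomial.IsHomogeneous.exists_quadraticMap_eq_eval {R σ : Type*} [CommRing R]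
    {φ : MvPolynomial σ R} (hφ : φ.IsHomogeneous 2) :
    ∃ Q : QuadraticMap R (σ → R) R, ∀ x, Q x = eval x φ := by
  have hspan := hφ.mem_span_X_mul_X
  clear hφ
  induction hspan using Submodule.span_induction with
  | mem _ h =>
    obtain ⟨⟨i, j⟩, rfl⟩ := h
    exact ⟨QuadraticMap.proj i j, fun x => by simp [QuadraticMap.proj_apply]⟩
  | zero => exact ⟨0, fun x => by simp⟩
  | add _ _ _ _ h₁ h₂ =>
    obtain ⟨Q₁, hQ₁⟩ := h₁
    obtain ⟨Q₂, hQ₂⟩ := h₂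
    exact ⟨Q₁ + Q₂, fun x => by simp [hQ₁, hQ₂]⟩
  | smul c _ _ h =>
    obtain ⟨Q, hQ⟩ := h
    exact ⟨c • Q, fun x => by simp [hQ]⟩

theorem LinearMap.finrank_le_finrank_ker_add_finrank {K V W : Type*} [Field K] [AddCommGroup V]
    [Module K V] [FiniteDimensional K V] [AddCommGroup W] [Module K W] [FiniteDimensional K W]
    (f : V →ₗ[K] W) : finrank K V ≤ finrank K (ker f) + finrank K W := by
  rw [← f.finrank_range_add_finrank_ker, add_comm]
  exact Nat.add_le_add_left (Submodule.finrank_le _) _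

theorem QuadraticMap.map_smul_add {R M N : Type*} [CommRing R] [AddCommGroup M] [Module R M]
    [AddCommGroup N] [Module R N] (Q : QuadraticMap R M N) (t : R) (v w : M) :
    Q (t • v + w) = t ^ 2 • Q v + t • polar Q v w + Q w := by
  rw [← polar_smul_left, polar, QuadraticMap.map_smul, pow_two]
  abel

section QuadraticallyClosed

variable {F : Type u} [Field F] {V : Type*} [AddCommGroup V] [Module F V]

theorem QuadraticallyClosed.exists_map_smul_add_eq_zero (hF : QuadraticallyClosed F)
    (Q : QuadraticForm F V) {v : V} (hv : Q v ≠ 0) (w : V) : ∃ t : F, Q (t • v + w) = 0 := by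
  obtain ⟨t, ht⟩ := hF.exists_isRoot_of_natDegree_eq_two
    (natDegree_quadratic hv (b := QuadraticMap.polar Q v w) (c := Q w))
  refine ⟨t, ?_⟩
  simp only [IsRoot, Polynomial.eval_add, Polynomial.eval_mul, Polynomial.eval_C,
    Polynomial.eval_pow, Polynomial.eval_X] at ht
  rw [Q.map_smul_add, smul_eq_mul, smul_eq_mul]
  linear_combination ht

theorem QuadraticForm.exists_ne_zero_forall_eq_zero_of_quadraticallyClosed
    [FiniteDimensional F V] (hF : QuadraticallyClosed F) {r : ℕ}
    (Q : Fin r → QuadraticForm F V) (hV : r * (r + 1) / 2 < finrank F V) :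
    ∃ v ≠ 0, ∀ i, Q i v = 0 := by
  induction r generalizing V with
  | zero =>
    obtain ⟨v, hv⟩ := (finrank_pos_iff_exists_ne_zero (R := F)).mp (by omega : 0 < finrank F V)
    exact ⟨v, hv, finZeroElim⟩
  | succ r ih =>
    have hsucc : (r + 1) * (r + 1 + 1) / 2 = r * (r + 1) / 2 + (r + 1) := by
      rw [show (r + 1) * (r + 1 + 1) = r * (r + 1) + 2 * (r + 1) by ring,
        Nat.add_mul_div_left _ _ two_pos]
    obtain ⟨v, hv0, hv⟩ := ih (fun i => Q i.castSucc) (by omega)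
    by_cases hvr : Q (Fin.last r) v = 0
    · exact ⟨v, hv0, Fin.lastCases hvr hv⟩
    obtain ⟨f, hf⟩ := Projective.exists_dual_ne_zero F hv0
    let L : Fin (r + 1) → V →ₗ[F] F := Fin.cons f fun i => (Q i.castSucc).polarBilin v
    set W := LinearMap.ker (LinearMap.pi L)
    have hW : r * (r + 1) / 2 < finrank F W := by
      have : finrank F V ≤ finrank F W + (r + 1) := by
        simpa using (LinearMap.pi L).finrank_le_finrank_ker_add_finrank
      omega
    obtain ⟨⟨w, hwW⟩, hw0, hw⟩ := ih (fun i => (Q i.castSucc).comp W.subtype) hW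
    simp only [W, L, LinearMap.ker_pi, Submodule.mem_iInf, Fin.forall_fin_succ, LinearMap.mem_ker,
      Fin.cons_zero, Fin.cons_succ, QuadraticMap.polarBilin_apply_apply] at hwW
    obtain ⟨hfw, hpolar⟩ := hwW
    replace hw0 : w ≠ 0 := by simpa using hw0
    replace hw : ∀ i : Fin r, Q i.castSucc w = 0 := hw
    obtain ⟨t, ht⟩ := hF.exists_map_smul_add_eq_zero (Q (Fin.last r)) hvr w
    refine ⟨t • v + w, fun h => ?_, Fin.lastCases ht fun i => ?_⟩
    · have : t * f v = 0 := by simpa [hfw] using congr_arg f h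
      obtain rfl : t = 0 := (mul_eq_zero.mp this).resolve_right hf
      exact hw0 (by simpa using h)
    · rw [QuadraticMap.map_smul_add, hv i, hpolar i, hw i]
      simp

end QuadraticallyClosed

theorem system_of_quadratic_forms_isotropic_of_quadratically_closed_general
    (F : Type u) [Field F] (hF : QuadraticallyClosed F)
    (r n : ℕ) (hn : r * (r + 1) / 2 < n)
    (φ : Fin r → MvPolynomial (Fin n) F)
    (hφ : ∀ i, (φ i).IsHomogeneous 2) :
    ∃ v : Fin n → F, v ≠ 0 ∧ ∀ i, MvPolynomial.eval v (φ i) = 0 := by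
  choose Q hQ using fun i => (hφ i).exists_quadraticMap_eq_eval
  obtain ⟨v, hv0, hv⟩ := QuadraticForm.exists_ne_zero_forall_eq_zero_of_quadraticallyClosed hF Q
    (by rwa [finrank_fin_fun])
  exact ⟨v, hv0, fun i => hQ i v ▸ hv i⟩

/-- **Corollary.** If `F` is quadratically closed, then any system of `r` quadratic forms
(homogeneous polynomials of degree 2) in strictly more than `r(r+1)/2` variables over `F`
is isotropic. -/
theorem system_of_quadratic_forms_isotropic_of_quadratically_closed
    (F : Type u) [Field F] (hF : QuadraticallyClosed F)
    (r n : ℕ) (hr : 1 ≤ r) (hn : r * (r + 1) / 2 < n)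
    (φ : Fin r → MvPolynomial (Fin n) F)
    (hφ : ∀ i, (φ i).IsHomogeneous 2) :
    ∃ v : Fin n → F, v ≠ 0 ∧ ∀ i, MvPolynomial.eval v (φ i) = 0 :=
  system_of_quadratic_forms_isotropic_of_quadratically_closed_general F hF r n hn φ hφ
end

section
/- Let p be a prime number and F a field with char F = p. Let K/F be an algebraic field extension, let α ∈ K be nonzero, and let r ∈ ℕ be minimal such that α^{p^r} is separable over F. Then there exists a purely inseparable field extension L/F with L^{p^{r+1}} ⊆ F and [L:F] ≤ p^{[F(α^{p^r}):F]·(r+1)} such that α is a p-th power in the field L(α). -/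
open Polynomial

/-!
Put `q = p ^ (r + 1)`, `a = α ^ p ^ r`, and let `f` be the separable minimal polynomial of `a`
over `F`. Taking `q`-th roots of the coefficients of `f` gives a separable polynomial `f^{1/q}`
with the root `β = a^{1/q}`; let `L` be generated over `F` by these coefficients. Then `L^q ⊆ F`
and `[L : F] ≤ q ^ deg f`. Over `L(α)` the element `β` is separable, being a root of `f^{1/q}`,
and purely inseparable, since `β ^ p = α`; hence `β ∈ L(α)`.
-/

theorem iterateFrobeniusEquiv_symm_pow_p_pow (R : Type*) [CommSemiring R] (p n : ℕ)
    [ExpChar R p] [PerfectRing R p] (x : R) : (iterateFrobeniusEquiv R p n).symm x ^ p ^ n = x :=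
  (iterateFrobeniusEquiv R p n).apply_symm_apply x

theorem Polynomial.Separable.isSeparable_of_mem_lifts {E Ω : Type*} [Field E] [Field Ω]
    [Algebra E Ω] {g : Polynomial Ω} (hg : g.Separable) (hlift : g ∈ lifts (algebraMap E Ω))
    {x : Ω} (hx : g.IsRoot x) : IsSeparable E x := by
  obtain ⟨G, rfl⟩ := (mem_lifts _).1 hlift
  exact ((separable_map _).1 hg).of_dvd (minpoly.dvd E x (by rwa [aeval_def, ← eval_map]))

namespace IntermediateField

variable {F Ω : Type*} [Field F] [Field Ω] [Algebra F Ω]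

theorem pow_mem_range_of_mem_adjoin (p n : ℕ) [ExpChar Ω p] {S : Set Ω}
    (hS : ∀ x ∈ S, x ^ p ^ n ∈ (algebraMap F Ω).range) {x : Ω} (hx : x ∈ adjoin F S) :
    x ^ p ^ n ∈ (algebraMap F Ω).range := by
  induction hx using adjoin_induction with
  | mem x hx => exact hS x hx
  | algebraMap c => exact ⟨c ^ p ^ n, map_pow _ _ _⟩
  | add x y _ _ hx hy => rw [add_pow_expChar_pow]; exact add_mem hx hy
  | inv x _ hx =>
    obtain ⟨c, hc⟩ := hx
    exact ⟨c⁻¹, by rw [map_inv₀, hc, inv_pow]⟩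
  | mul x y _ _ hx hy => rw [mul_pow]; exact mul_mem hx hy

theorem finrank_adjoin_simple_le_of_pow_mem {m : ℕ} (hm : m ≠ 0) {x : Ω}
    (hx : x ^ m ∈ (algebraMap F Ω).range) : Module.finrank F F⟮x⟯ ≤ m := by
  obtain ⟨c, hc⟩ := hx
  have hmonic : (X ^ m - C c).Monic := monic_X_pow_sub_C c hm
  have hroot : aeval x (X ^ m - C c) = 0 := by simp [hc]
  rw [adjoin.finrank ⟨_, hmonic, hroot⟩]
  exact (natDegree_le_of_dvd (minpoly.dvd F x hroot) hmonic.ne_zero).trans_eq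
    (natDegree_X_pow_sub_C)

theorem finrank_adjoin_image_le_pow_card {ι : Type*} {m : ℕ} (hm : m ≠ 0) (v : ι → Ω)
    (s : Finset ι) (hv : ∀ i ∈ s, v i ^ m ∈ (algebraMap F Ω).range) :
    Module.finrank F (adjoin F (v '' s)) ≤ m ^ s.card := by
  classical
  induction s using Finset.induction with
  | empty =>
    rw [Finset.coe_empty, Set.image_empty, adjoin_empty, IntermediateField.finrank_bot,
      Finset.card_empty, pow_zero]
  | @insert i s hi ih =>
    set E := adjoin F (v '' s)
    have hE : adjoin F (v '' ↑(insert i s)) = (adjoin E {v i}).restrictScalars F := by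
      rw [adjoin_adjoin_left, Finset.coe_insert, Set.image_insert_eq, Set.union_comm,
        Set.insert_eq]
    have hvi : v i ^ m ∈ (algebraMap E Ω).range := by
      obtain ⟨c, hc⟩ := hv i (Finset.mem_insert_self i s)
      exact ⟨algebraMap F E c, by rw [← IsScalarTower.algebraMap_apply, hc]⟩
    calc Module.finrank F (adjoin F (v '' ↑(insert i s)))
        = Module.finrank F E * Module.finrank E E⟮v i⟯ := by
          rw [hE, Module.finrank_mul_finrank F E]; rfl
      _ ≤ m ^ s.card * m := Nat.mul_le_mul
          (ih fun j hj ↦ hv j (Finset.mem_insert_of_mem hj))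
          (finrank_adjoin_simple_le_of_pow_mem hm hvi)
      _ = m ^ (insert i s).card := by rw [Finset.card_insert_of_notMem hi, pow_succ]

theorem mem_of_isSeparable_of_pow_mem (p n : ℕ) [ExpChar F p] (E : IntermediateField F Ω)
    {x : Ω} (hsep : IsSeparable E x) (hx : x ^ p ^ n ∈ E) : x ∈ E := by
  have : IsPurelyInseparable E E⟮x⟯ :=
    (isPurelyInseparable_adjoin_simple_iff_pow_mem E Ω p).2 ⟨n, ⟨x ^ p ^ n, hx⟩, rfl⟩
  have : Algebra.IsSeparable E E⟮x⟯ := (isSeparable_adjoin_simple_iff_isSeparable E Ω).2 hsep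
  have hxE : x ∈ E⟮x⟯ := mem_adjoin_simple_self E x
  rw [eq_bot_of_isPurelyInseparable_of_isSeparable E⟮x⟯, mem_bot] at hxE
  obtain ⟨y, rfl⟩ := hxE
  exact y.2

theorem mem_lifts_of_monic_of_coeff_mem {g : Polynomial Ω} (hg : g.Monic)
    (E : IntermediateField F Ω) (hE : ∀ i < g.natDegree, g.coeff i ∈ E) :
    g ∈ lifts (algebraMap E Ω) := by
  refine (lifts_iff_coeff_lifts g).2 fun i ↦ ?_
  have hi : g.coeff i ∈ E := by
    rcases lt_trichotomy i g.natDegree with hi | rfl | hi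
    · exact hE i hi
    · rw [hg.coeff_natDegree]; exact one_mem E
    · rw [coeff_eq_zero_of_natDegree_lt hi]; exact zero_mem E
  exact ⟨⟨_, hi⟩, rfl⟩

section RootMinpoly

variable (F) (p n : ℕ) [ExpChar Ω p] [PerfectRing Ω p] (a : Ω)

noncomputable def rootMinpoly : Polynomial Ω :=
  ((minpoly F a).map (algebraMap F Ω)).map ((iterateFrobeniusEquiv Ω p n).symm : Ω →+* Ω)

noncomputable def rootCoeffField : IntermediateField F Ω :=
  adjoin F ((rootMinpoly F p n a).coeff '' (Finset.range (minpoly F a).natDegree : Set ℕ))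

variable {F p n a}

theorem coeff_rootMinpoly_pow (i : ℕ) :
    (rootMinpoly F p n a).coeff i ^ p ^ n = algebraMap F Ω ((minpoly F a).coeff i) := by
  rw [rootMinpoly, coeff_map, coeff_map]
  exact iterateFrobeniusEquiv_symm_pow_p_pow Ω p n _

theorem natDegree_rootMinpoly : (rootMinpoly F p n a).natDegree = (minpoly F a).natDegree := by
  rw [rootMinpoly, natDegree_map, natDegree_map]

theorem monic_rootMinpoly (ha : IsIntegral F a) : (rootMinpoly F p n a).Monic :=
  ((minpoly.monic ha).map _).map _

theorem separable_rootMinpoly (ha : IsSeparable F a) : (rootMinpoly F p n a).Separable :=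
  (Separable.map ha).map

theorem isRoot_rootMinpoly :
    (rootMinpoly F p n a).IsRoot ((iterateFrobeniusEquiv Ω p n).symm a) := by
  refine (eval_map_apply ((iterateFrobeniusEquiv Ω p n).symm : Ω →+* Ω) a).trans ?_
  rw [eval_map_algebraMap, minpoly.aeval, map_zero]

theorem pow_mem_range_of_mem_rootCoeffField {x : Ω} (hx : x ∈ rootCoeffField F p n a) :
    x ^ p ^ n ∈ (algebraMap F Ω).range := by
  refine pow_mem_range_of_mem_adjoin p n ?_ hx
  rintro _ ⟨i, -, rfl⟩
  exact ⟨_, (coeff_rootMinpoly_pow i).symm⟩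

theorem finrank_rootCoeffField_le :
    Module.finrank F (rootCoeffField F p n a) ≤ p ^ ((minpoly F a).natDegree * n) := by
  calc Module.finrank F (rootCoeffField F p n a)
      ≤ (p ^ n) ^ (Finset.range (minpoly F a).natDegree).card :=
        finrank_adjoin_image_le_pow_card (pow_ne_zero n (expChar_pos Ω p).ne') _ _
          fun i _ ↦ ⟨_, (coeff_rootMinpoly_pow i).symm⟩
    _ = p ^ ((minpoly F a).natDegree * n) := by rw [Finset.card_range, ← pow_mul, mul_comm]

theorem isSeparable_iterateFrobeniusEquiv_symm_of_rootCoeffField_le (ha : IsSeparable F a)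
    {E : IntermediateField F Ω} (hE : rootCoeffField F p n a ≤ E) :
    IsSeparable E ((iterateFrobeniusEquiv Ω p n).symm a) := by
  refine (separable_rootMinpoly ha).isSeparable_of_mem_lifts ?_ isRoot_rootMinpoly
  refine mem_lifts_of_monic_of_coeff_mem (monic_rootMinpoly ha.isIntegral) E fun i hi ↦ hE ?_
  rw [natDegree_rootMinpoly] at hi
  exact subset_adjoin F _ ⟨i, Finset.mem_range.2 hi, rfl⟩

end RootMinpoly

end IntermediateField

open IntermediateField

theorem exists_purely_inseparable_extension_pth_power_general
    (p : ℕ) (hp : p.Prime) (F K : Type u) [Field F] [Field K] [Algebra F K]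
    [CharP F p]
    (α : K) (r : ℕ)
    (hsep : IsSeparable F (α ^ p ^ r)) :
    ∃ L : IntermediateField F (AlgebraicClosure K),
      IsPurelyInseparable F L ∧
      (∀ x : L, (x : AlgebraicClosure K) ^ p ^ (r + 1) ∈
        (algebraMap F (AlgebraicClosure K)).range) ∧
      Module.finrank F L ≤ p ^ (Module.finrank F (F⟮α ^ p ^ r⟯) * (r + 1)) ∧
      ∃ β ∈ L ⊔ F⟮algebraMap K (AlgebraicClosure K) α⟯,
        β ^ p = algebraMap K (AlgebraicClosure K) α := by
  have : ExpChar F p := ExpChar.prime hp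
  set Ω := AlgebraicClosure K
  have : ExpChar Ω p := expChar_of_injective_algebraMap (algebraMap F Ω).injective p
  set a := algebraMap K Ω (α ^ p ^ r)
  have hminpoly : minpoly F a = minpoly F (α ^ p ^ r) :=
    minpoly.algebraMap_eq (algebraMap K Ω).injective _
  have ha : IsSeparable F a := by rwa [IsSeparable, hminpoly]
  have hdeg : (minpoly F a).natDegree = Module.finrank F F⟮α ^ p ^ r⟯ := by
    rw [hminpoly, adjoin.finrank hsep.isIntegral]
  set L := rootCoeffField F p (r + 1) a
  set β := (iterateFrobeniusEquiv Ω p (r + 1)).symm a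
  have hβ : β ^ p = algebraMap K Ω α := (iterateFrobeniusEquiv Ω p r).injective <| by
    rw [iterateFrobeniusEquiv_def, iterateFrobeniusEquiv_def, ← pow_mul, ← pow_succ',
      iterateFrobeniusEquiv_symm_pow_p_pow]
    exact map_pow _ _ _
  refine ⟨L, ?_, fun x ↦ pow_mem_range_of_mem_rootCoeffField x.2,
    hdeg ▸ finrank_rootCoeffField_le, β, ?_, hβ⟩
  · refine (isPurelyInseparable_iff_pow_mem F p).2 fun x ↦ ?_
    obtain ⟨c, hc⟩ := pow_mem_range_of_mem_rootCoeffField x.2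
    exact ⟨r + 1, c, Subtype.ext hc⟩
  · refine mem_of_isSeparable_of_pow_mem p 1 _
      (isSeparable_iterateFrobeniusEquiv_symm_of_rootCoeffField_le ha le_sup_left) ?_
    rw [pow_one, hβ]
    exact le_sup_right (α := IntermediateField F Ω) (mem_adjoin_simple_self F _)

/-- **Lemma (after Albert).** Let `p` be a prime, `F` a field of characteristic `p`, `K/F` an
algebraic field extension, `α ∈ K` nonzero, and let `r` be minimal such that `α^(p^r)` is
separable over `F`.  Then there is a purely inseparable extension `L/F` (realized inside an
algebraic closure of `K`) with `L^(p^(r+1)) ⊆ F` and `[L:F] ≤ p^([F(α^(p^r)):F]·(r+1))`,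
such that `α` is a `p`-th power in `L(α)`. -/
theorem exists_purely_inseparable_extension_pth_power
    (p : ℕ) (hp : p.Prime) (F K : Type u) [Field F] [Field K] [Algebra F K]
    [Algebra.IsAlgebraic F K] [CharP F p]
    (α : K) (hα : α ≠ 0) (r : ℕ)
    (hsep : IsSeparable F (α ^ p ^ r))
    (hmin : ∀ s : ℕ, IsSeparable F (α ^ p ^ s) → r ≤ s) :
    ∃ L : IntermediateField F (AlgebraicClosure K),
      IsPurelyInseparable F L ∧
      (∀ x : L, (x : AlgebraicClosure K) ^ p ^ (r + 1) ∈
        (algebraMap F (AlgebraicClosure K)).range) ∧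
      Module.finrank F L ≤ p ^ (Module.finrank F (F⟮α ^ p ^ r⟯) * (r + 1)) ∧
      ∃ β ∈ L ⊔ F⟮algebraMap K (AlgebraicClosure K) α⟯,
        β ^ p = algebraMap K (AlgebraicClosure K) α :=
  exists_purely_inseparable_extension_pth_power_general p hp F K α r hsep
end

section
/- Let K/F be a finite field extension, let α ∈ K be nonzero, and let g ∈ F[X] be a polynomial with deg(g) ≤ 2 and g(α) ≠ 0. Consider the 3-dimensional diagonal quadratic form φ = ⟨1, α, g(α)⟩ over K (i.e. (x,y,z) ↦ x² + αy² + g(α)z²). Then there exists a generalized 2-extension F′/F with [F′:F] ≤ 2³ such that φ becomes isotropic over the compositum KF′ (more precisely, over the ring K ⊗_F F′, the base change of φ has a nonzero zero; when K and F′ are linearly disjoint over F this is the field compositum). -/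
/-!
Write `g = c₀ + c₁ X + c₂ X²`. If `a² = -c₂`, `b² = -c₀` and `c² = -c₁ - 2ab`, then
`(aα + b)² + α c² + g(α) = 0`, so `(aα + b, c, 1)` is a nonzero zero of `⟨1, α, g(α)⟩`.
Adjoining the square roots `a`, `b`, `c` one after the other to `F` gives a tower of at most
three quadratic steps.
-/

universe u

open scoped TensorProduct

/-- A finite field extension `K/F` is a *generalized 2-extension* if it admits a tower of
intermediate fields `F = K₀ ⊆ K₁ ⊆ … ⊆ K_m = K` in which each step is a quadratic
field extension. -/
def IsGeneralized2Extension (F : Type*) (K : Type*) [Field F] [Field K] [Algebra F K] :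
    Prop :=
  FiniteDimensional F K ∧
    ∃ (m : ℕ) (T : Fin (m + 1) → IntermediateField F K),
      T 0 = ⊥ ∧ T (Fin.last m) = ⊤ ∧
        ∀ i : Fin m, T i.castSucc ≤ T i.succ ∧
          Module.finrank F (T i.succ) = 2 * Module.finrank F (T i.castSucc)

open IntermediateField Module Polynomial

namespace IntermediateField

variable {F E : Type*} [Field F] [Field E] [Algebra F E]

theorem finrank_adjoin_simple_eq_two_of_sq_mem_bot {x : E}
    (hsq : x ^ 2 ∈ (⊥ : IntermediateField F E)) (hx : x ∉ (⊥ : IntermediateField F E)) :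
    finrank F F⟮x⟯ = 2 := by
  obtain ⟨r, hr⟩ := mem_bot.mp hsq
  have hmonic : (X ^ 2 - C r).Monic := monic_X_pow_sub_C r two_ne_zero
  have hroot : aeval x (X ^ 2 - C r) = 0 := by simp [hr]
  have hint : IsIntegral F x := ⟨_, hmonic, hroot⟩
  have hle : (minpoly F x).natDegree ≤ 2 := by
    simpa using natDegree_le_natDegree (minpoly.min F x hmonic hroot)
  have hne : (minpoly F x).natDegree ≠ 1 := by
    rwa [← adjoin.finrank hint, Ne, finrank_adjoin_simple_eq_one_iff]
  have hpos := minpoly.natDegree_pos hint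
  rw [adjoin.finrank hint]
  omega

theorem finrank_sup_adjoin_simple_of_sq_mem {L : IntermediateField F E} {x : E}
    (hsq : x ^ 2 ∈ L) (hx : x ∉ L) : finrank F ↥(L ⊔ F⟮x⟯) = 2 * finrank F L := by
  have h2 : finrank L L⟮x⟯ = 2 :=
    finrank_adjoin_simple_eq_two_of_sq_mem_bot ⟨⟨x ^ 2, hsq⟩, rfl⟩
      fun ⟨y, hy⟩ => hx (hy ▸ y.2)
  rw [← restrictScalars_adjoin_eq_sup]
  change finrank F L⟮x⟯ = _
  rw [← finrank_mul_finrank F L, h2, mul_comm]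

theorem finrank_sup_adjoin_simple_le_of_sq_mem {L : IntermediateField F E} {x : E}
    (hsq : x ^ 2 ∈ L) : finrank F ↥(L ⊔ F⟮x⟯) ≤ 2 * finrank F L := by
  by_cases hx : x ∈ L
  · rw [sup_eq_left.mpr (adjoin_simple_le_iff.mpr hx)]
    omega
  · exact (finrank_sup_adjoin_simple_of_sq_mem hsq hx).le

/-- `IsGeneralized2Extension F E` is `FiniteDimensional F E ∧ IsQuadraticTower ⊤`. -/
def IsQuadraticTower (L : IntermediateField F E) : Prop :=
  ∃ (m : ℕ) (T : Fin (m + 1) → IntermediateField F E),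
    T 0 = ⊥ ∧ T (Fin.last m) = L ∧
      ∀ i : Fin m, T i.castSucc ≤ T i.succ ∧
        finrank F (T i.succ) = 2 * finrank F (T i.castSucc)

theorem isQuadraticTower_bot : IsQuadraticTower (⊥ : IntermediateField F E) :=
  ⟨0, fun _ => ⊥, rfl, rfl, fun i => i.elim0⟩

theorem IsQuadraticTower.of_le_of_finrank_eq_two_mul {L L' : IntermediateField F E}
    (hL : IsQuadraticTower L) (hle : L ≤ L') (hrank : finrank F L' = 2 * finrank F L) :
    IsQuadraticTower L' := by
  obtain ⟨m, T, hT0, hTm, hstep⟩ := hL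
  refine ⟨m + 1, Fin.snoc T L', ?_, by simp, fun i => Fin.lastCases ?_ (fun j => ?_) i⟩
  · rw [show (0 : Fin (m + 2)) = Fin.castSucc 0 from rfl, Fin.snoc_castSucc, hT0]
  · rw [Fin.succ_last, Fin.snoc_last, Fin.snoc_castSucc, hTm]
    exact ⟨hle, hrank⟩
  · rw [Fin.succ_castSucc, Fin.snoc_castSucc, Fin.snoc_castSucc]
    exact hstep j

theorem IsQuadraticTower.sup_adjoin_simple {L : IntermediateField F E} {x : E}
    (hL : IsQuadraticTower L) (hsq : x ^ 2 ∈ L) : IsQuadraticTower (L ⊔ F⟮x⟯) := by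
  by_cases hx : x ∈ L
  · rwa [sup_eq_left.mpr (adjoin_simple_le_iff.mpr hx)]
  · exact hL.of_le_of_finrank_eq_two_mul le_sup_left
      (finrank_sup_adjoin_simple_of_sq_mem hsq hx)

end IntermediateField

section

variable {F E : Type*} [Field F] [Field E] [Algebra F E]

theorem isGeneralized2Extension_of_adjoin_eq_top [FiniteDimensional F E] {a b c : E}
    (hE : F⟮a, b, c⟯ = ⊤) (ha : a ^ 2 ∈ (⊥ : IntermediateField F E)) (hb : b ^ 2 ∈ F⟮a⟯)
    (hc : c ^ 2 ∈ F⟮a, b⟯) :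
    IsGeneralized2Extension F E ∧ finrank F E ≤ 2 ^ 3 := by
  have ha' : (⊥ : IntermediateField F E) ⊔ F⟮a⟯ = F⟮a⟯ := bot_sup_eq _
  have hab : F⟮a⟯ ⊔ F⟮b⟯ = F⟮a, b⟯ := by rw [← adjoin_union, Set.singleton_union]
  have habc : F⟮a, b⟯ ⊔ F⟮c⟯ = ⊤ := by
    rw [← adjoin_union, Set.insert_union, Set.singleton_union, hE]
  have htower : IsQuadraticTower (⊤ : IntermediateField F E) := by
    have ta := ha' ▸ isQuadraticTower_bot.sup_adjoin_simple ha
    have tab := hab ▸ ta.sup_adjoin_simple hb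
    exact habc ▸ tab.sup_adjoin_simple hc
  refine ⟨⟨inferInstance, htower⟩, ?_⟩
  calc finrank F E = finrank F ↥(F⟮a, b⟯ ⊔ F⟮c⟯) := by rw [habc, finrank_top']
    _ ≤ 2 * finrank F F⟮a, b⟯ := finrank_sup_adjoin_simple_le_of_sq_mem hc
    _ ≤ 2 * (2 * finrank F F⟮a⟯) := by
      rw [← hab]
      gcongr
      exact finrank_sup_adjoin_simple_le_of_sq_mem hb
    _ ≤ 2 * (2 * (2 * finrank F (⊥ : IntermediateField F E))) := by
      gcongr
      rw [← ha']
      exact finrank_sup_adjoin_simple_le_of_sq_mem ha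
    _ = 2 ^ 3 := by rw [IntermediateField.finrank_bot]; norm_num

end

theorem exists_isGeneralized2Extension_sq_eq (F : Type u) [Field F] (u v w : F) :
    ∃ (F' : Type u) (_ : Field F') (_ : Algebra F F'),
      IsGeneralized2Extension F F' ∧ finrank F F' ≤ 2 ^ 3 ∧
        ∃ a b c : F', a ^ 2 = algebraMap F F' u ∧ b ^ 2 = algebraMap F F' v ∧
          c ^ 2 = algebraMap F F' w - 2 * a * b := by
  obtain ⟨a, ha⟩ := IsAlgClosed.exists_pow_nat_eq (algebraMap F (AlgebraicClosure F) u) two_pos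
  obtain ⟨b, hb⟩ := IsAlgClosed.exists_pow_nat_eq (algebraMap F (AlgebraicClosure F) v) two_pos
  obtain ⟨c, hc⟩ := IsAlgClosed.exists_pow_nat_eq
    (algebraMap F (AlgebraicClosure F) w - 2 * a * b) two_pos
  let M := F⟮a, b, c⟯
  have : FiniteDimensional F M :=
    finiteDimensional_adjoin fun x _ => Algebra.IsIntegral.isIntegral x
  let a' : M := ⟨a, subset_adjoin _ _ (by simp)⟩
  let b' : M := ⟨b, subset_adjoin _ _ (by simp)⟩
  let c' : M := ⟨c, subset_adjoin _ _ (by simp)⟩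
  have ha' : a' ^ 2 = algebraMap F M u := Subtype.ext ha
  have hb' : b' ^ 2 = algebraMap F M v := Subtype.ext hb
  have hc' : c' ^ 2 = algebraMap F M w - 2 * a' * b' := Subtype.ext hc
  have hM : F⟮a', b', c'⟯ = ⊤ := by
    apply lift_injective
    simp [Set.image_insert_eq, M, a', b', c']
  have hcmem : c' ^ 2 ∈ F⟮a', b'⟯ := hc' ▸ sub_mem (IntermediateField.algebraMap_mem _ _)
    (mul_mem (mul_mem (ofNat_mem _ 2) (subset_adjoin _ _ (by simp)))
      (subset_adjoin _ _ (by simp)))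
  obtain ⟨hgen, hrank⟩ := isGeneralized2Extension_of_adjoin_eq_top hM
    (ha' ▸ IntermediateField.algebraMap_mem _ _) (hb' ▸ IntermediateField.algebraMap_mem _ _)
    hcmem
  exact ⟨M, inferInstance, inferInstance, hgen, hrank, a', b', c', ha', hb', hc'⟩

theorem aeval_eq_of_natDegree_le_two {R A : Type*} [CommSemiring R] [CommSemiring A]
    [Algebra R A] {g : R[X]} (hg : g.natDegree ≤ 2) (x : A) :
    aeval x g = algebraMap R A (g.coeff 0) + algebraMap R A (g.coeff 1) * x +
      algebraMap R A (g.coeff 2) * x ^ 2 := by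
  rw [aeval_eq_sum_range' (Nat.lt_succ_of_le hg)]
  simp [Finset.sum_range_succ, Algebra.smul_def]

theorem exists_isotropic_of_sq_eq {R A : Type*} [CommRing R] [CommRing A] [Nontrivial A]
    [Algebra R A] (α : A) {g : R[X]} (hg : g.natDegree ≤ 2) {a b c : A}
    (ha : a ^ 2 = algebraMap R A (-g.coeff 2)) (hb : b ^ 2 = algebraMap R A (-g.coeff 0))
    (hc : c ^ 2 = algebraMap R A (-g.coeff 1) - 2 * a * b) :
    ∃ x y z : A, ¬(x = 0 ∧ y = 0 ∧ z = 0) ∧ x ^ 2 + α * y ^ 2 + aeval α g * z ^ 2 = 0 := by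
  refine ⟨a * α + b, c, 1, fun h => one_ne_zero h.2.2, ?_⟩
  rw [aeval_eq_of_natDegree_le_two hg]
  simp only [map_neg] at ha hb hc
  linear_combination α ^ 2 * ha + hb + α * hc

theorem quadratic_slot_lemma_general
    (F K : Type u) [Field F] [Field K] [Algebra F K]
    (α : K) (g : Polynomial F) (hg : g.natDegree ≤ 2) :
    ∃ (F' : Type u) (_ : Field F') (_ : Algebra F F'),
      IsGeneralized2Extension F F' ∧ Module.finrank F F' ≤ 2 ^ 3 ∧
        ∃ x y z : K ⊗[F] F',
          ¬(x = 0 ∧ y = 0 ∧ z = 0) ∧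
          x ^ 2 + algebraMap K (K ⊗[F] F') α * y ^ 2 +
            algebraMap K (K ⊗[F] F') (Polynomial.aeval α g) * z ^ 2 = 0 := by
  obtain ⟨F', _, _, hF', hrank, a, b, c, ha, hb, hc⟩ :=
    exists_isGeneralized2Extension_sq_eq F (-g.coeff 2) (-g.coeff 0) (-g.coeff 1)
  have : Nontrivial (K ⊗[F] F') := Module.FaithfullyFlat.lTensor_nontrivial F K F'
  let ι : F' →ₐ[F] K ⊗[F] F' := Algebra.TensorProduct.includeRight
  refine ⟨F', _, _, hF', hrank, ?_⟩
  rw [← aeval_algebraMap_apply]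
  refine exists_isotropic_of_sq_eq _ hg (a := ι a) (b := ι b) (c := ι c) ?_ ?_ ?_
  · rw [← map_pow, ha, ι.commutes]
  · rw [← map_pow, hb, ι.commutes]
  · rw [← map_pow, hc, map_sub, ι.commutes, map_mul, map_mul, map_ofNat]

/-- **Lemma.** Let `K/F` be a finite field extension, `α ∈ K` nonzero, and `g ∈ F[X]` a
polynomial of degree at most `2` with `g(α) ≠ 0`.  Then there is a generalized 2-extension
`F′/F` with `[F′:F] ≤ 2³` such that the diagonal quadratic form `⟨1, α, g(α)⟩` becomes
isotropic over `K ⊗_F F′`. -/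
theorem quadratic_slot_lemma
    (F K : Type u) [Field F] [Field K] [Algebra F K] [FiniteDimensional F K]
    (α : K) (hα : α ≠ 0) (g : Polynomial F) (hg : g.natDegree ≤ 2)
    (hgα : Polynomial.aeval α g ≠ 0) :
    ∃ (F' : Type u) (_ : Field F') (_ : Algebra F F'),
      IsGeneralized2Extension F F' ∧ Module.finrank F F' ≤ 2 ^ 3 ∧
        ∃ x y z : K ⊗[F] F',
          ¬(x = 0 ∧ y = 0 ∧ z = 0) ∧
          x ^ 2 + algebraMap K (K ⊗[F] F') α * y ^ 2 +
            algebraMap K (K ⊗[F] F') (Polynomial.aeval α g) * z ^ 2 = 0 :=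
  quadratic_slot_lemma_general F K α g hg
end
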